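/- arXiv:1812.08702 — 2 statements merged into one kernel-verified Lean document; each statement's English description precedes it below -/
import Mathlib

section
/- ∑_{n≥0} EO-bar(8n+6) q^n = 4 (q^2;q^2)_∞ (q^4;q^4)_∞ (q^8;q^8)_∞^2 / (q;q)_∞^3. In particular EO-bar(8n+6) ≡ 0 (mod 4) for all n ≥ 0. -/
open PowerSeries

/-- `(q^a; q^c)_∞ = ∏_{i ≥ 0} (1 - q^{a + c·i})` as a formal power series in `q = X`
(for `a ≥ 1`, the `n`-th coefficient only depends on the first `n+1` factors). -/
noncomputable def qp (a c : ℕ) : PowerSeries ℚ :=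
  PowerSeries.mk fun n =>
    PowerSeries.coeff n
      (∏ i ∈ Finset.range (n + 1), (1 - (PowerSeries.X : PowerSeries ℚ) ^ (a + c * i)))

/-!
With `fₖ = (qᵏ;qᵏ)_∞` and `g = (q;q²)_∞`, the generating function `f₄³/f₂²` of `EObar` is
`G(q²)` for `G = f₂³/f₁²`, and `G g² = f₂` because `f₁ = g f₂`. If `H g² = K(q²)`, then
`H(q) - H(-q) = K(q²) (g(-q)² - g(q)²) / (g(-q) g(q))²`; Gauss's identity `φ(q) = f₂ g(-q)²`
and `φ(q) - φ(-q) = 4qψ(q⁸)` turn this into `oddPart H = 2 K ψ(q⁴) / (f₁ g²)`. Applied twice,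
together with `ψ(q) f₁ = f₂²`, this gives `4 f₂ f₄ f₈² / f₁³`, whose coefficients are four times
integers since `f₁` has constant coefficient `1`.

The two theta function identities are limits of the finite Jacobi triple product, itself a
specialisation of Cauchy's `q`-binomial theorem; all identities between infinite products are
checked modulo every power of `X`.
-/

open Finset

namespace Nat

lemma choose_two_succ (k : ℕ) : (k + 1).choose 2 = k + k.choose 2 := by
  rw [choose_succ_succ', choose_one_right]

lemma choose_two_add (m u : ℕ) : (m + u).choose 2 = m.choose 2 + u.choose 2 + m * u := by
  induction u with
  | zero => simp
  | succ u ih => rw [← add_assoc, choose_two_succ, ih, choose_two_succ]; ring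

lemma add_two_mul_choose_two (u : ℕ) : u + 2 * u.choose 2 = u ^ 2 := by
  induction u with
  | zero => simp
  | succ u ih => rw [choose_two_succ]; linear_combination ih

lemma two_mul_choose_two_succ (k : ℕ) : 2 * (k + 1).choose 2 = k ^ 2 + k := by
  linear_combination add_two_mul_choose_two (k + 1)

lemma sub_one_le_choose_two (u : ℕ) : u - 1 ≤ u.choose 2 := by
  cases u with
  | zero => simp
  | succ u => simp [choose_two_succ]

end Nat

lemma Finset.prod_range_two_mul {M : Type*} [CommMonoid M] (f : ℕ → M) (n : ℕ) :
    ∏ i ∈ range (2 * n), f i = ∏ i ∈ range n, (f (2 * i) * f (2 * i + 1)) := by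
  induction n with
  | zero => simp
  | succ n ih => rw [mul_add_one, prod_range_succ, prod_range_succ, prod_range_succ, ih, mul_assoc]

lemma Finset.sum_range_add_mul (a s n : ℕ) :
    ∑ t ∈ range n, (a + s * t) = a * n + s * n.choose 2 := by
  rw [sum_add_distrib, ← mul_sum, sum_range_id, ← Nat.choose_two_right]
  simp [mul_comm]

namespace PowerSeries

variable {R : Type*} [CommRing R]

instance [CharZero R] : CharZero R⟦X⟧ := (constantCoeff (R := R)).charZero

section EvenOdd

noncomputable def evenPart (f : R⟦X⟧) : R⟦X⟧ := mk fun n => coeff (2 * n) f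

noncomputable def oddPart (f : R⟦X⟧) : R⟦X⟧ := mk fun n => coeff (2 * n + 1) f

@[simp]
lemma coeff_evenPart (f : R⟦X⟧) (n : ℕ) : coeff n (evenPart f) = coeff (2 * n) f :=
  coeff_mk _ _

@[simp]
lemma coeff_oddPart (f : R⟦X⟧) (n : ℕ) : coeff n (oddPart f) = coeff (2 * n + 1) f :=
  coeff_mk _ _

lemma expand_two_injective : Function.Injective (expand 2 two_ne_zero : R⟦X⟧ → R⟦X⟧) :=
  fun f g h => ext fun n => by simpa using congrArg (coeff (2 * n)) h

@[simp]
lemma evenPart_expand_two (f : R⟦X⟧) : evenPart (expand 2 two_ne_zero f) = f := by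
  ext n
  simp

lemma coeff_expand_two_two_mul_add_one (f : R⟦X⟧) (n : ℕ) :
    coeff (2 * n + 1) (expand 2 two_ne_zero f) = 0 :=
  coeff_expand_of_not_dvd _ _ _ (by omega)

lemma coeff_X_mul_expand_two_two_mul (f : R⟦X⟧) (n : ℕ) :
    coeff (2 * n) (X * expand 2 two_ne_zero f) = 0 := by
  cases n with
  | zero => simp
  | succ n => rw [mul_add_one, coeff_succ_X_mul, coeff_expand_two_two_mul_add_one]

lemma expand_evenPart_add_X_mul_expand_oddPart (f : R⟦X⟧) :
    expand 2 two_ne_zero (evenPart f) + X * expand 2 two_ne_zero (oddPart f) = f := by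
  ext m
  obtain ⟨n, rfl | rfl⟩ := Nat.even_or_odd' m
  · simp [coeff_X_mul_expand_two_two_mul]
  · simp [coeff_succ_X_mul, coeff_expand_two_two_mul_add_one]

lemma rescale_neg_one_expand_two (f : R⟦X⟧) :
    rescale (-1) (expand 2 two_ne_zero f) = expand 2 two_ne_zero f := by
  ext m
  obtain ⟨n, rfl | rfl⟩ := Nat.even_or_odd' m
  · simp [coeff_rescale, pow_mul]
  · simp [coeff_rescale, coeff_expand_two_two_mul_add_one]

lemma two_mul_X_mul_expand_oddPart (f : R⟦X⟧) :
    2 * X * expand 2 two_ne_zero (oddPart f) = f - rescale (-1) f := by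
  conv_rhs => rw [← expand_evenPart_add_X_mul_expand_oddPart f]
  rw [map_add, map_mul, rescale_neg_one_X, rescale_neg_one_expand_two,
    rescale_neg_one_expand_two]
  ring

end EvenOdd

section XAdic

variable {N : ℕ} {f g : R⟦X⟧}

lemma smodEq_X_pow_iff :
    f ≡ g [SMOD Ideal.span {X ^ N}] ↔ ∀ m < N, coeff m f = coeff m g := by
  simp [SModEq.sub_mem, Ideal.mem_span_singleton, X_pow_dvd_iff, sub_eq_zero]

lemma eq_of_forall_smodEq (h : ∀ N, f ≡ g [SMOD Ideal.span {X ^ N}]) : f = g :=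
  ext fun m => smodEq_X_pow_iff.1 (h (m + 1)) m m.lt_succ_self

lemma X_pow_smodEq_zero {m : ℕ} (h : N ≤ m) : (X : R⟦X⟧) ^ m ≡ 0 [SMOD Ideal.span {X ^ N}] :=
  SModEq.zero.2 (Ideal.mem_span_singleton.2 (pow_dvd_pow X h))

lemma smodEq_map_of_X_dvd (φ : R⟦X⟧ →+* R⟦X⟧) (hφ : X ∣ φ X)
    (h : f ≡ g [SMOD Ideal.span {X ^ N}]) : φ f ≡ φ g [SMOD Ideal.span {X ^ N}] := by
  rw [SModEq.sub_mem, Ideal.mem_span_singleton] at h ⊢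
  rw [← map_sub]
  exact (pow_dvd_pow_of_dvd hφ N).trans (by simpa using map_dvd φ h)

lemma prod_one_sub_X_pow_smodEq {a c M M' : ℕ} (hM : M ≤ M') (hN : N ≤ a + c * M) :
    ∏ i ∈ range M', (1 - (X : R⟦X⟧) ^ (a + c * i)) ≡ ∏ i ∈ range M, (1 - X ^ (a + c * i))
      [SMOD Ideal.span {X ^ N}] := by
  rw [← prod_range_mul_prod_Ico _ hM]
  conv_rhs => rw [← mul_one (∏ i ∈ range M, _)]
  refine SModEq.rfl.mul ?_
  rw [← prod_const_one (s := Ico M M')]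
  refine SModEq.prod fun i hi => ?_
  have hi : N ≤ a + c * i := hN.trans (by gcongr; exact (mem_Ico.1 hi).1)
  simpa using SModEq.rfl.sub (X_pow_smodEq_zero (R := R) hi)

end XAdic

noncomputable def lacunarySeries (e : ℕ → ℕ) : R⟦X⟧ := mk (Set.indicator (Set.range e) 1)

lemma lacunarySeries_smodEq {e : ℕ → ℕ} (he : StrictMono e) {N n : ℕ} (hN : N ≤ n) :
    lacunarySeries e ≡ ∑ k ∈ range n, (X : R⟦X⟧) ^ e k [SMOD Ideal.span {X ^ N}] := by
  refine smodEq_X_pow_iff.2 fun m hm => ?_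
  simp only [lacunarySeries, coeff_mk, map_sum, coeff_X_pow]
  by_cases hmem : m ∈ Set.range e
  · obtain ⟨k, rfl⟩ := hmem
    have hk : k < n := by have := he.id_le k; simp only [id] at this; omega
    rw [Set.indicator_of_mem (Set.mem_range_self k), sum_eq_single_of_mem k (mem_range.2 hk)]
    · simp
    · intro j _ hjk
      simp [he.injective.ne hjk.symm]
  · rw [Set.indicator_of_notMem hmem, sum_eq_zero]
    rintro k -
    rw [if_neg]
    rintro rfl
    exact hmem ⟨k, rfl⟩

lemma expand_inv {k : Type*} [Field k] (p : ℕ) (hp : p ≠ 0) (f : k⟦X⟧) :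
    expand p hp f⁻¹ = (expand p hp f)⁻¹ := by
  by_cases hf : constantCoeff f = 0
  · rw [inv_eq_zero.2 hf, inv_eq_zero.2 (by simpa using hf), map_zero]
  · rw [eq_inv_iff_mul_eq_one (by simpa using hf), ← map_mul, PowerSeries.inv_mul_cancel _ hf,
      map_one]

lemma inv_mem_range_map_intCast {f : ℚ⟦X⟧} (hf : f ∈ (map (Int.castRingHom ℚ)).range)
    (h0 : constantCoeff f = 1) : f⁻¹ ∈ (map (Int.castRingHom ℚ)).range := by
  obtain ⟨F, rfl⟩ := hf
  have hF : constantCoeff F = 1 := by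
    rw [← coeff_zero_eq_constantCoeff_apply, coeff_map, eq_intCast] at h0
    rw [← coeff_zero_eq_constantCoeff_apply]
    exact_mod_cast h0
  obtain ⟨u, hu⟩ := (isUnit_iff_constantCoeff.2 (hF ▸ isUnit_one)).exists_right_inv
  refine ⟨u, (eq_inv_iff_mul_eq_one ?_).2 ?_⟩
  · rw [← coeff_zero_eq_constantCoeff_apply, coeff_map, coeff_zero_eq_constantCoeff_apply, hF]
    simp
  · rw [← map_mul, mul_comm, hu, map_one]

lemma natCast_dvd_of_mk_eq_mul_map_intCast {a : ℕ → ℕ} {d : ℕ} {G : ℤ⟦X⟧}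
    (h : mk (fun n => (a n : ℚ)) = d * map (Int.castRingHom ℚ) G) (n : ℕ) : d ∣ a n := by
  have hn := congrArg (coeff n) h
  rw [coeff_mk, ← map_natCast C, coeff_C_mul, coeff_map, eq_intCast] at hn
  exact Int.natCast_dvd_natCast.1 ⟨coeff n G, by exact_mod_cast hn⟩

end PowerSeries

section QBinomial

variable {R : Type*} [CommRing R]

def qPochhammer (q : R) (n : ℕ) : R := ∏ i ∈ range n, (1 - q ^ (i + 1))

/-- `qBinomial q i j` is the Gaussian binomial coefficient `[i + j choose i]_q`. -/
def qBinomial (q : R) : ℕ → ℕ → R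
  | 0, _ => 1
  | _ + 1, 0 => 1
  | i + 1, j + 1 => qBinomial q (i + 1) j + q ^ (j + 1) * qBinomial q i (j + 1)

@[simp]
lemma qBinomial_zero_left (q : R) (j : ℕ) : qBinomial q 0 j = 1 := by
  cases j <;> simp [qBinomial]

@[simp]
lemma qBinomial_zero_right (q : R) (i : ℕ) : qBinomial q i 0 = 1 := by
  cases i <;> simp [qBinomial]

lemma qBinomial_succ_succ (q : R) (i j : ℕ) :
    qBinomial q (i + 1) (j + 1) = qBinomial q (i + 1) j + q ^ (j + 1) * qBinomial q i (j + 1) := by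
  simp [qBinomial]

lemma qBinomial_mul_qPochhammer_mul_qPochhammer (q : R) (i j : ℕ) :
    qBinomial q i j * qPochhammer q i * qPochhammer q j = qPochhammer q (i + j) := by
  induction i generalizing j with
  | zero => simp [qPochhammer]
  | succ i ihi =>
    induction j with
    | zero => simp [qPochhammer]
    | succ j ihj =>
      have hi := ihi (j + 1)
      rw [show i + (j + 1) = i + j + 1 by omega] at hi
      rw [show i + 1 + j = i + j + 1 by omega] at ihj
      rw [show i + 1 + (j + 1) = i + j + 1 + 1 by omega, qBinomial_succ_succ]
      simp only [qPochhammer, prod_range_succ _ i, prod_range_succ _ j,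
        prod_range_succ _ (i + j + 1)] at hi ihj ⊢
      linear_combination (1 - q ^ (j + 1)) * ihj + q ^ (j + 1) * (1 - q ^ (i + 1)) * hi

lemma prod_add_mul_pow_eq_sum_qBinomial (q y z : R) (m : ℕ) :
    ∏ t ∈ range m, (y + z * q ^ t) =
      ∑ p ∈ antidiagonal m, qBinomial q p.1 p.2 * (z ^ p.1 * q ^ p.1.choose 2) * y ^ p.2 := by
  set T : ℕ × ℕ → R := fun p => qBinomial q p.1 p.2 * (z ^ p.1 * q ^ p.1.choose 2) * y ^ p.2
  induction m with
  | zero => simp [T]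
  | succ m ih =>
    -- Pascal's rule splits a term of degree `m + 1` into `y` and `z q^m` times terms of degree `m`
    have split : ∀ p ∈ antidiagonal (m + 1), T p =
        (if p.2 = 0 then 0 else y * T (p.1, p.2 - 1)) +
          (if p.1 = 0 then 0 else z * q ^ m * T (p.1 - 1, p.2)) := by
      rintro ⟨_ | i, _ | j⟩ hp <;> simp only [HasAntidiagonal.mem_antidiagonal] at hp
      · omega
      · simp only [T, qBinomial_zero_left, Nat.choose_zero_succ, pow_zero, pow_succ,
          Nat.add_eq_zero_iff, one_ne_zero, and_false, if_false, if_true, add_tsub_cancel_right]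
        ring
      · obtain rfl : i = m := by omega
        simp only [T, qBinomial_zero_right, Nat.choose_two_succ, pow_add, pow_succ, pow_zero,
          Nat.add_eq_zero_iff, one_ne_zero, and_false, if_false, if_true, add_tsub_cancel_right]
        ring
      · rw [show m = i + j + 1 by omega]
        simp only [T, qBinomial_succ_succ, Nat.choose_two_succ, pow_add, pow_succ,
          Nat.add_eq_zero_iff, one_ne_zero, and_false, if_false, add_tsub_cancel_right]
        ring
    rw [prod_range_succ, ih, sum_congr rfl split, sum_add_distrib,
      Nat.sum_antidiagonal_succ', Nat.sum_antidiagonal_succ]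
    simp only [add_tsub_cancel_right, Nat.add_one_ne_zero, if_false, if_true, zero_add]
    rw [← mul_sum, ← mul_sum]
    ring

end QBinomial

section Jacobi

variable {R : Type*} [CommRing R]

def jacobiExp (a b n : ℕ) (p : ℕ × ℕ) : ℕ :=
  if n ≤ p.1 then a * (p.1 - n) + (a + b) * (p.1 - n).choose 2
  else b * (p.2 - n) + (a + b) * (p.2 - n).choose 2

lemma jacobiExp_spec (a b n : ℕ) {p : ℕ × ℕ} (hp : p.1 + p.2 = 2 * n) :
    a * p.1 + (a + b) * p.1.choose 2 + (a + b) * n * p.2 =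
      a * n + (a + b) * n.choose 2 + (a + b) * n * n + jacobiExp a b n p := by
  obtain ⟨i, j⟩ := p
  simp only at hp
  unfold jacobiExp
  split_ifs with h
  · obtain ⟨u, rfl⟩ := Nat.exists_eq_add_of_le h
    obtain rfl : n = j + u := by omega
    simp only [add_tsub_cancel_left, Nat.choose_two_add (j + u) u]
    ring
  · obtain ⟨v, rfl⟩ : ∃ v, n = i + v := ⟨n - i, by omega⟩
    obtain rfl : j = i + v + v := by omega
    simp only [add_tsub_cancel_left, Nat.choose_two_add i v]
    linear_combination (a + b) * (Nat.add_two_mul_choose_two v).symm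

lemma le_of_jacobiExp_lt {a b n N : ℕ} {p : ℕ × ℕ} (hs : 1 ≤ a + b) (hn : 2 * N ≤ n)
    (hp : p.1 + p.2 = 2 * n) (hE : jacobiExp a b n p < N) : N ≤ p.1 ∧ N ≤ p.2 := by
  have key : ∀ u c, u - 1 ≤ c * u + (a + b) * u.choose 2 := fun u c =>
    (Nat.sub_one_le_choose_two u).trans (le_add_left (Nat.le_mul_of_pos_left _ hs))
  unfold jacobiExp at hE
  split_ifs at hE
  · have := key (p.1 - n) a
    omega
  · have := key (p.2 - n) b
    omega

lemma sum_antidiagonal_X_pow_jacobiExp (a b n : ℕ) :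
    ∑ p ∈ antidiagonal (2 * n), (X : R⟦X⟧) ^ jacobiExp a b n p =
      ∑ u ∈ range (n + 1), X ^ (a * u + (a + b) * u.choose 2) +
        ∑ u ∈ range n, X ^ (b * (u + 1) + (a + b) * (u + 1).choose 2) := by
  rw [Nat.sum_antidiagonal_eq_sum_range_succ_mk, show (2 * n).succ = n + (n + 1) by omega,
    sum_range_add, add_comm, ← sum_range_reflect _ n]
  congr 1
  · refine sum_congr rfl fun u _ => ?_
    simp [jacobiExp]
  · refine sum_congr rfl fun u hu => ?_
    have hu := mem_range.1 hu
    simp [jacobiExp, show ¬ n ≤ n - 1 - u by omega, show 2 * n - (n - 1 - u) - n = u + 1 by omega]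

lemma prod_range_two_mul_X_pow_add (a b n : ℕ) :
    ∏ t ∈ range (2 * n), ((X : R⟦X⟧) ^ ((a + b) * n) + X ^ a * (X ^ (a + b)) ^ t) =
      X ^ (a * n + (a + b) * n.choose 2 + (a + b) * n * n) *
        ((∏ j ∈ range n, (1 + X ^ (a + (a + b) * j))) *
          ∏ j ∈ range n, (1 + X ^ (b + (a + b) * j))) := by
  set s := a + b with hs
  have hlow : ∀ t ∈ range n, (X : R⟦X⟧) ^ (s * n) + X ^ a * (X ^ s) ^ (n - 1 - t) =
      X ^ (a + s * (n - 1 - t)) * (1 + X ^ (b + s * t)) := by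
    intro t ht
    obtain ⟨d, rfl⟩ : ∃ d, n = t + 1 + d := ⟨n - 1 - t, by simp only [mem_range] at ht; omega⟩
    simp only [show t + 1 + d - 1 - t = d by omega, ← pow_mul, ← pow_add, mul_add, mul_one]
    rw [add_comm]
    congr 2
    rw [hs]
    ring
  have hhigh : ∀ t ∈ range n, (X : R⟦X⟧) ^ (s * n) + X ^ a * (X ^ s) ^ (n + t) =
      X ^ (s * n) * (1 + X ^ (a + s * t)) := fun t _ => by ring
  rw [two_mul, prod_range_add, ← prod_range_reflect _ n, prod_congr rfl hlow,
    prod_congr rfl hhigh, prod_mul_distrib, prod_mul_distrib, prod_pow_eq_pow_sum,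
    sum_range_reflect (fun t => a + s * t), sum_range_add_mul, prod_const, card_range, ← pow_mul,
    pow_add]
  ring

/-- The finite Jacobi triple product: Cauchy's formula at `y = X ^ ((a + b) n)`, `z = X ^ a`,
`q = X ^ (a + b)`. -/
lemma prod_one_add_X_pow_mul_prod_one_add_X_pow_eq_sum (a b n : ℕ) :
    (∏ j ∈ range n, (1 + (X : R⟦X⟧) ^ (a + (a + b) * j))) *
        ∏ j ∈ range n, (1 + (X : R⟦X⟧) ^ (b + (a + b) * j)) =
      ∑ p ∈ antidiagonal (2 * n), qBinomial (X ^ (a + b)) p.1 p.2 * X ^ jacobiExp a b n p := by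
  refine X_pow_mul_injective (k := a * n + (a + b) * n.choose 2 + (a + b) * n * n) ?_
  dsimp only
  rw [← prod_range_two_mul_X_pow_add, prod_add_mul_pow_eq_sum_qBinomial, mul_sum]
  refine sum_congr rfl fun p hp => ?_
  calc _ = qBinomial (X ^ (a + b)) p.1 p.2 *
        X ^ (a * p.1 + (a + b) * p.1.choose 2 + (a + b) * n * p.2) := by
        simp only [pow_add, pow_mul]
        ring
    _ = _ := by
        rw [jacobiExp_spec a b n (mem_antidiagonal.1 hp), pow_add]
        ring

end Jacobi

section InfiniteProducts

variable {a c : ℕ}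

lemma qp_smodEq_prod {N M : ℕ} (hc : 1 ≤ c) (hN : N ≤ a + c * M) :
    qp a c ≡ ∏ i ∈ range M, (1 - X ^ (a + c * i)) [SMOD Ideal.span {X ^ N}] := by
  refine smodEq_X_pow_iff.2 fun m hm => ?_
  rw [qp, coeff_mk]
  rcases le_total (m + 1) M with h | h
  · exact (smodEq_X_pow_iff.1 (prod_one_sub_X_pow_smodEq h (by nlinarith)) m m.lt_succ_self).symm
  · exact smodEq_X_pow_iff.1 (prod_one_sub_X_pow_smodEq h (by omega)) m hm

lemma constantCoeff_qp (ha : 1 ≤ a) : constantCoeff (qp a c) = 1 := by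
  rw [← coeff_zero_eq_constantCoeff_apply, qp, coeff_mk]
  simp [zero_pow (by omega : a ≠ 0)]

lemma qp_mul_inv (ha : 1 ≤ a) : qp a c * (qp a c)⁻¹ = 1 :=
  PowerSeries.mul_inv_cancel _ (by simp [constantCoeff_qp ha])

lemma qp_ne_zero (ha : 1 ≤ a) : qp a c ≠ 0 := fun h => by
  simpa [h] using constantCoeff_qp (c := c) ha

lemma qp_mem_range_map_intCast (a c : ℕ) : qp a c ∈ (map (Int.castRingHom ℚ)).range := by
  refine ⟨mk fun n => coeff n (∏ i ∈ range (n + 1), (1 - (X : ℤ⟦X⟧) ^ (a + c * i))), ?_⟩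
  ext n
  rw [coeff_map, coeff_mk, qp, coeff_mk, ← coeff_map, map_prod]
  simp

lemma expand_qp {p : ℕ} (hp : p ≠ 0) (hc : 1 ≤ c) :
    expand p hp (qp a c) = qp (p * a) (p * c) := by
  refine eq_of_forall_smodEq fun N => ?_
  calc expand p hp (qp a c)
      ≡ expand p hp (∏ i ∈ range N, (1 - X ^ (a + c * i))) [SMOD Ideal.span {X ^ N}] :=
        smodEq_map_of_X_dvd (expand p hp : ℚ⟦X⟧ →ₐ[ℚ] ℚ⟦X⟧).toRingHom
          (by simpa using dvd_pow_self (X : ℚ⟦X⟧) hp) (qp_smodEq_prod hc (by nlinarith))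
    _ = ∏ i ∈ range N, (1 - X ^ (p * a + p * c * i)) := by
        refine (map_prod _ _ _).trans (prod_congr rfl fun i _ => ?_)
        rw [map_sub, map_one, map_pow, expand_X, ← pow_mul]
        ring_nf
    _ ≡ qp (p * a) (p * c) [SMOD Ideal.span {X ^ N}] :=
        (qp_smodEq_prod (Nat.mul_pos (Nat.pos_of_ne_zero hp) hc)
          (by nlinarith [Nat.le_mul_of_pos_left N (Nat.mul_pos (Nat.pos_of_ne_zero hp) hc)])).symm

lemma qp_eq_qp_mul_qp (hc : 1 ≤ c) : qp a c = qp a (2 * c) * qp (a + c) (2 * c) := by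
  refine eq_of_forall_smodEq fun N => ?_
  calc qp a c ≡ ∏ i ∈ range (2 * N), (1 - X ^ (a + c * i)) [SMOD Ideal.span {X ^ N}] :=
        qp_smodEq_prod hc (by nlinarith)
    _ = (∏ i ∈ range N, (1 - X ^ (a + 2 * c * i))) *
          ∏ i ∈ range N, (1 - X ^ (a + c + 2 * c * i)) := by
        rw [prod_range_two_mul, prod_mul_distrib]
        ring_nf
    _ ≡ qp a (2 * c) * qp (a + c) (2 * c) [SMOD Ideal.span {X ^ N}] :=
        ((qp_smodEq_prod (by omega) (by nlinarith)).mul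
          (qp_smodEq_prod (by omega) (by nlinarith))).symm

lemma prod_one_add_X_pow_mul_qp_smodEq {N M : ℕ} (hc : 1 ≤ c) (hN : N ≤ a + c * M) :
    (∏ j ∈ range M, (1 + X ^ (a + c * j))) * qp a c ≡ qp (2 * a) (2 * c)
      [SMOD Ideal.span {X ^ N}] :=
  calc (∏ j ∈ range M, (1 + X ^ (a + c * j))) * qp a c
      ≡ (∏ j ∈ range M, (1 + X ^ (a + c * j))) * ∏ j ∈ range M, (1 - X ^ (a + c * j))
        [SMOD Ideal.span {X ^ N}] := SModEq.rfl.mul (qp_smodEq_prod hc hN)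
    _ = ∏ j ∈ range M, (1 - X ^ (2 * a + 2 * c * j)) := by
        rw [← prod_mul_distrib]
        refine prod_congr rfl fun j _ => ?_
        rw [show 2 * a + 2 * c * j = (a + c * j) * 2 by ring, pow_mul]
        ring
    _ ≡ qp (2 * a) (2 * c) [SMOD Ideal.span {X ^ N}] :=
        (qp_smodEq_prod (by omega) (by linarith)).symm

lemma rescale_neg_one_qp_smodEq {N M : ℕ} (ha : Odd a) (hc : Even c) (hc1 : 1 ≤ c)
    (hN : N ≤ a + c * M) :
    rescale (-1) (qp a c) ≡ ∏ j ∈ range M, (1 + X ^ (a + c * j)) [SMOD Ideal.span {X ^ N}] := by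
  simpa [map_prod, ((hc.mul_right _).odd_add ha).neg_pow] using
    smodEq_map_of_X_dvd (rescale (-1)) (by simp) (qp_smodEq_prod hc1 hN)

lemma rescale_neg_one_qp_mul_qp (ha : Odd a) (hc : Even c) (hc1 : 1 ≤ c) :
    rescale (-1) (qp a c) * qp a c = qp (2 * a) (2 * c) :=
  eq_of_forall_smodEq fun N =>
    ((rescale_neg_one_qp_smodEq ha hc hc1 (M := N) (by nlinarith)).mul SModEq.rfl).trans
      (prod_one_add_X_pow_mul_qp_smodEq hc1 (by nlinarith))

lemma qPochhammer_X_pow_smodEq {s N k : ℕ} (hs : 1 ≤ s) (hk : N ≤ k) :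
    qPochhammer (X ^ s : ℚ⟦X⟧) k ≡ qp s s [SMOD Ideal.span {X ^ N}] := by
  have h : qPochhammer (X ^ s : ℚ⟦X⟧) k = ∏ i ∈ range k, (1 - X ^ (s + s * i)) :=
    prod_congr rfl fun i _ => by rw [← pow_mul, mul_add_one, add_comm]
  rw [h]
  exact (qp_smodEq_prod hs (by nlinarith)).symm

lemma qBinomial_X_pow_smodEq {s N i j : ℕ} (hs : 1 ≤ s) (hi : N ≤ i) (hj : N ≤ j) :
    qBinomial (X ^ s : ℚ⟦X⟧) i j ≡ (qp s s)⁻¹ [SMOD Ideal.span {X ^ N}] := by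
  have hf : qp s s * (qp s s)⁻¹ = 1 := qp_mul_inv hs
  have h1 : qBinomial (X ^ s : ℚ⟦X⟧) i j * qp s s * qp s s ≡
      qBinomial (X ^ s) i j * qPochhammer (X ^ s) i * qPochhammer (X ^ s) j
      [SMOD Ideal.span {X ^ N}] :=
    (SModEq.rfl.mul (qPochhammer_X_pow_smodEq hs hi).symm).mul
      (qPochhammer_X_pow_smodEq hs hj).symm
  have h2 : qPochhammer (X ^ s : ℚ⟦X⟧) (i + j) ≡ qp s s [SMOD Ideal.span {X ^ N}] :=
    qPochhammer_X_pow_smodEq hs (by omega)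
  rw [← qBinomial_mul_qPochhammer_mul_qPochhammer] at h2
  have h := ((h1.trans h2).mul (SModEq.refl (qp s s)⁻¹)).mul (SModEq.refl (qp s s)⁻¹)
  rwa [mul_assoc _ (qp s s) (qp s s)⁻¹, hf, mul_one, mul_assoc, hf, mul_one, one_mul] at h

lemma qp_mul_prod_one_add_X_pow_mul_prod_one_add_X_pow_smodEq {a b N n : ℕ} (hs : 1 ≤ a + b)
    (hn : 2 * N ≤ n) :
    qp (a + b) (a + b) * ((∏ j ∈ range n, (1 + X ^ (a + (a + b) * j))) *
        ∏ j ∈ range n, (1 + X ^ (b + (a + b) * j))) ≡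
      ∑ u ∈ range (n + 1), X ^ (a * u + (a + b) * u.choose 2) +
        ∑ u ∈ range n, X ^ (b * (u + 1) + (a + b) * (u + 1).choose 2)
      [SMOD Ideal.span {X ^ N}] := by
  rw [prod_one_add_X_pow_mul_prod_one_add_X_pow_eq_sum, ← sum_antidiagonal_X_pow_jacobiExp]
  conv_rhs => rw [← one_mul (∑ p ∈ _, _), ← qp_mul_inv (c := a + b) hs, mul_assoc, mul_sum]
  refine SModEq.rfl.mul (SModEq.sum fun p hp => ?_)
  by_cases hE : jacobiExp a b n p < N
  · obtain ⟨h1, h2⟩ := le_of_jacobiExp_lt hs hn (mem_antidiagonal.1 hp) hE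
    exact (qBinomial_X_pow_smodEq hs h1 h2).mul SModEq.rfl
  · have h0 : ∀ g : ℚ⟦X⟧, g * X ^ jacobiExp a b n p ≡ 0 [SMOD Ideal.span {X ^ N}] := fun g => by
      simpa using SModEq.rfl.mul (X_pow_smodEq_zero (R := ℚ) (not_lt.1 hE)) (x₁ := g)
    exact (h0 _).trans (h0 _).symm

lemma expand_two_qp_one_one : expand 2 two_ne_zero (qp 1 1) = qp 2 2 := expand_qp _ le_rfl

lemma expand_two_qp_two_two : expand 2 two_ne_zero (qp 2 2) = qp 4 4 := expand_qp _ one_le_two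

lemma expand_two_qp_four_four : expand 2 two_ne_zero (qp 4 4) = qp 8 8 :=
  expand_qp _ (by norm_num)

lemma expand_two_qp_one_two : expand 2 two_ne_zero (qp 1 2) = qp 2 4 := expand_qp _ one_le_two

lemma qp_one_one_eq : qp 1 1 = qp 1 2 * qp 2 2 := qp_eq_qp_mul_qp le_rfl

lemma rescale_neg_one_qp_one_two_mul : rescale (-1) (qp 1 2) * qp 1 2 = qp 2 4 :=
  rescale_neg_one_qp_mul_qp odd_one even_two one_le_two

end InfiniteProducts

section Theta

/-- `2 * theta - 1` is Ramanujan's `φ(q) = ∑_{m ∈ ℤ} q ^ m²`. -/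
noncomputable def theta : ℚ⟦X⟧ := lacunarySeries (· ^ 2)

noncomputable def psi : ℚ⟦X⟧ := lacunarySeries fun m => (m + 1).choose 2

lemma theta_smodEq {N n : ℕ} (hN : N ≤ n) :
    theta ≡ ∑ k ∈ range n, X ^ (k ^ 2) [SMOD Ideal.span {X ^ N}] :=
  lacunarySeries_smodEq (Nat.pow_left_strictMono two_ne_zero) hN

lemma psi_smodEq {N n : ℕ} (hN : N ≤ n) :
    psi ≡ ∑ k ∈ range n, X ^ ((k + 1).choose 2) [SMOD Ideal.span {X ^ N}] :=
  lacunarySeries_smodEq (strictMono_nat_of_lt_succ fun m => by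
    rw [Nat.choose_two_succ (m + 1)]; omega) hN

lemma qp_two_two_mul_rescale_sq : qp 2 2 * rescale (-1) (qp 1 2) ^ 2 = 2 * theta - 1 := by
  refine eq_of_forall_smodEq fun N => ?_
  have hP := rescale_neg_one_qp_smodEq (N := N) (M := 2 * N) odd_one even_two one_le_two
    (by omega)
  have hJ := qp_mul_prod_one_add_X_pow_mul_prod_one_add_X_pow_smodEq (a := 1) (b := 1)
    (N := N) (n := 2 * N) (by norm_num) le_rfl
  norm_num [Nat.add_two_mul_choose_two] at hJ
  calc qp 2 2 * rescale (-1) (qp 1 2) ^ 2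
      ≡ qp 2 2 * ((∏ j ∈ range (2 * N), (1 + X ^ (1 + 2 * j))) *
          ∏ j ∈ range (2 * N), (1 + X ^ (1 + 2 * j))) [SMOD Ideal.span {X ^ N}] :=
        SModEq.rfl.mul (by rw [sq]; exact hP.mul hP)
    _ ≡ ∑ k ∈ range (2 * N + 1), X ^ k ^ 2 + ∑ k ∈ range (2 * N), X ^ (k + 1) ^ 2
        [SMOD Ideal.span {X ^ N}] := hJ
    _ = 2 * ∑ k ∈ range (2 * N + 1), X ^ (k ^ 2) - 1 := by
        linear_combination -(sum_range_succ' (fun k => (X : ℚ⟦X⟧) ^ k ^ 2) (2 * N))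
    _ ≡ 2 * theta - 1 [SMOD Ideal.span {X ^ N}] :=
        (SModEq.rfl.mul (theta_smodEq (by omega)).symm).sub SModEq.rfl

lemma psi_mul_qp_one_one : psi * qp 1 1 = qp 2 2 ^ 2 := by
  refine mul_left_cancel₀ two_ne_zero (eq_of_forall_smodEq fun N => ?_)
  have hJ := qp_mul_prod_one_add_X_pow_mul_prod_one_add_X_pow_smodEq (a := 1) (b := 0)
    (N := N) (n := 2 * N + 1) (by norm_num) (by omega)
  norm_num [← Nat.choose_two_succ] at hJ
  have hQ : ∀ M, N ≤ M + 1 →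
      (∏ j ∈ range M, (1 + X ^ (1 + j))) * qp 1 1 ≡ qp 2 2 [SMOD Ideal.span {X ^ N}] :=
    fun M hM => by
      simpa using prod_one_add_X_pow_mul_qp_smodEq (a := 1) (c := 1) (M := M) le_rfl (by omega)
  have hsplit : ∏ j ∈ range (2 * N + 1), (1 + (X : ℚ⟦X⟧) ^ j) =
      2 * ∏ j ∈ range (2 * N), (1 + X ^ (1 + j)) := by
    rw [prod_range_succ']
    simp only [add_comm _ 1, pow_zero]
    ring
  calc 2 * (psi * qp 1 1) = (psi + psi) * qp 1 1 := by ring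
    _ ≡ (∑ k ∈ range (2 * N + 1 + 1), X ^ (k + 1).choose 2 +
          ∑ k ∈ range (2 * N + 1), X ^ (k + 1).choose 2) * qp 1 1 [SMOD Ideal.span {X ^ N}] :=
        ((psi_smodEq (by omega)).add (psi_smodEq (by omega))).mul SModEq.rfl
    _ ≡ qp 1 1 * ((∏ j ∈ range (2 * N + 1), (1 + X ^ (1 + j))) *
          ∏ j ∈ range (2 * N + 1), (1 + X ^ j)) * qp 1 1 [SMOD Ideal.span {X ^ N}] :=
        hJ.symm.mul SModEq.rfl
    _ = 2 * ((∏ j ∈ range (2 * N + 1), (1 + X ^ (1 + j))) * qp 1 1) *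
          ((∏ j ∈ range (2 * N), (1 + X ^ (1 + j))) * qp 1 1) := by
        rw [hsplit]
        ring
    _ ≡ 2 * qp 2 2 * qp 2 2 [SMOD Ideal.span {X ^ N}] :=
        (SModEq.rfl.mul (hQ _ (by omega))).mul (hQ _ (by omega))
    _ = 2 * qp 2 2 ^ 2 := by ring

lemma oddPart_theta :
    oddPart theta = expand 2 two_ne_zero (expand 2 two_ne_zero psi) := by
  ext n
  rw [coeff_oddPart, ← expand_mul, coeff_expand]
  simp only [theta, psi, lacunarySeries, coeff_mk]
  by_cases h : ∃ k, n = 4 * (k + 1).choose 2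
  · obtain ⟨k, rfl⟩ := h
    have hsq : 2 * (4 * (k + 1).choose 2) + 1 ∈ Set.range fun m : ℕ => m ^ 2 :=
      ⟨2 * k + 1, by linear_combination 4 * (Nat.two_mul_choose_two_succ k).symm⟩
    rw [if_pos (dvd_mul_right 4 _), Nat.mul_div_cancel_left _ (by norm_num),
      Set.indicator_of_mem (Set.mem_range_self k), Set.indicator_of_mem hsq, Pi.one_apply,
      Pi.one_apply]
  · rw [Set.indicator_of_notMem]
    · split_ifs with h4
      · refine (Set.indicator_of_notMem ?_ _).symm
        rintro ⟨k, hk⟩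
        exact h ⟨k, by simp only at hk; omega⟩
      · rfl
    · rintro ⟨m, hm⟩
      obtain ⟨k, rfl | rfl⟩ := Nat.even_or_odd' m
      · ring_nf at hm
        omega
      · have := Nat.two_mul_choose_two_succ k
        ring_nf at hm
        exact h ⟨k, by omega⟩

lemma qp_two_two_mul_sq_sub_sq :
    qp 2 2 * (rescale (-1) (qp 1 2) ^ 2 - qp 1 2 ^ 2) =
      4 * X * expand 2 two_ne_zero (expand 2 two_ne_zero (expand 2 two_ne_zero psi)) := by
  have h := qp_two_two_mul_rescale_sq
  have hr := congrArg (rescale (-1 : ℚ)) h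
  rw [map_mul, map_pow, rescale_rescale, ← expand_two_qp_one_one, rescale_neg_one_expand_two,
    expand_two_qp_one_one, map_sub, map_mul, map_one, map_ofNat] at hr
  norm_num at hr
  have hodd := two_mul_X_mul_expand_oddPart theta
  rw [oddPart_theta] at hodd
  linear_combination h - hr - 2 * hodd

end Theta

lemma oddPart_mul_eq_of_mul_qp_one_two_sq_eq {H K : ℚ⟦X⟧}
    (h : H * qp 1 2 ^ 2 = expand 2 two_ne_zero K) :
    oddPart H * (qp 1 1 * qp 1 2 ^ 2) =
      2 * K * expand 2 two_ne_zero (expand 2 two_ne_zero psi) := by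
  have hr : rescale (-1) H * rescale (-1) (qp 1 2) ^ 2 = expand 2 two_ne_zero K := by
    simpa [rescale_neg_one_expand_two] using congrArg (rescale (-1 : ℚ)) h
  have hodd := two_mul_X_mul_expand_oddPart H
  refine expand_two_injective (mul_left_cancel₀ (mul_ne_zero two_ne_zero X_ne_zero) ?_)
  rw [map_mul, map_mul, map_mul, map_pow, expand_two_qp_one_one, expand_two_qp_one_two,
    ← rescale_neg_one_qp_one_two_mul, map_mul, map_ofNat]
  linear_combination (qp 2 2 * rescale (-1) (qp 1 2) ^ 2 * qp 1 2 ^ 2) * hodd +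
    (qp 2 2 * rescale (-1) (qp 1 2) ^ 2) * h - (qp 2 2 * qp 1 2 ^ 2) * hr +
    expand 2 two_ne_zero K * qp_two_two_mul_sq_sub_sq

lemma oddPart_oddPart_qp_div :
    oddPart (oddPart (qp 2 2 ^ 3 * (qp 1 1 ^ 2)⁻¹)) =
      4 * qp 2 2 * qp 4 4 * qp 8 8 ^ 2 * (qp 1 1 ^ 3)⁻¹ := by
  set G := qp 2 2 ^ 3 * (qp 1 1 ^ 2)⁻¹
  have hf1 : qp 1 1 ≠ 0 := qp_ne_zero le_rfl
  have hG : G * qp 1 2 ^ 2 = expand 2 two_ne_zero (qp 1 1) := by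
    refine mul_right_cancel₀ (pow_ne_zero 2 hf1) ?_
    have hinv : qp 1 1 ^ 2 * (qp 1 1 ^ 2)⁻¹ = 1 :=
      PowerSeries.mul_inv_cancel _ (by simp [constantCoeff_qp (le_refl 1)])
    rw [expand_two_qp_one_one]
    nth_rw 2 [qp_one_one_eq]
    linear_combination qp 2 2 ^ 3 * qp 1 2 ^ 2 * hinv
  have h1 : oddPart G * qp 1 2 ^ 2 =
      expand 2 two_ne_zero (2 * expand 2 two_ne_zero psi) := by
    refine mul_left_cancel₀ hf1 ?_
    rw [map_mul, map_ofNat]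
    linear_combination oddPart_mul_eq_of_mul_qp_one_two_sq_eq hG
  have h2 := oddPart_mul_eq_of_mul_qp_one_two_sq_eq h1
  have hψ2 : expand 2 two_ne_zero psi * qp 2 2 = qp 4 4 ^ 2 := by
    simpa [expand_two_qp_one_one, expand_two_qp_two_two] using
      congrArg (expand 2 two_ne_zero) psi_mul_qp_one_one
  have hψ4 : expand 2 two_ne_zero (expand 2 two_ne_zero psi) * qp 4 4 = qp 8 8 ^ 2 := by
    simpa [expand_two_qp_two_two, expand_two_qp_four_four] using
      congrArg (expand 2 two_ne_zero) hψ2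
  rw [eq_mul_inv_iff_mul_eq (by simp [constantCoeff_qp (le_refl 1)])]
  refine mul_right_cancel₀ (qp_ne_zero (a := 4) (c := 4) (by norm_num)) ?_
  rw [qp_one_one_eq] at h2 ⊢
  linear_combination qp 2 2 ^ 2 * qp 4 4 * h2 + 4 * qp 2 2 * qp 8 8 ^ 2 * hψ2 +
    4 * qp 2 2 * expand 2 two_ne_zero psi * qp 2 2 * hψ4

/-- `∑_{n≥0} EObar(8n+6) qⁿ = 4 (q²;q²)_∞ (q⁴;q⁴)_∞ (q⁸;q⁸)_∞² / (q;q)_∞³`;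
in particular `EObar(8n+6) ≡ 0 (mod 4)` for all `n`. -/
theorem EObar_8n6_generating_function (EObar : ℕ → ℕ)
    (hEO : PowerSeries.mk (fun n => (EObar n : ℚ)) = qp 4 4 ^ 3 * (qp 2 2 ^ 2)⁻¹) :
    PowerSeries.mk (fun n => (EObar (8 * n + 6) : ℚ)) =
      4 * qp 2 2 * qp 4 4 * qp 8 8 ^ 2 * (qp 1 1 ^ 3)⁻¹ ∧
    ∀ n : ℕ, 4 ∣ EObar (8 * n + 6) := by
  have heven : evenPart (mk fun n => (EObar n : ℚ)) = qp 2 2 ^ 3 * (qp 1 1 ^ 2)⁻¹ := by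
    have h : qp 4 4 ^ 3 * (qp 2 2 ^ 2)⁻¹ =
        expand 2 two_ne_zero (qp 2 2 ^ 3 * (qp 1 1 ^ 2)⁻¹) := by
      rw [map_mul, map_pow, expand_inv, map_pow, expand_two_qp_two_two, expand_two_qp_one_one]
    rw [hEO, h, evenPart_expand_two]
  have hgf : mk (fun n => (EObar (8 * n + 6) : ℚ)) =
      4 * qp 2 2 * qp 4 4 * qp 8 8 ^ 2 * (qp 1 1 ^ 3)⁻¹ := by
    rw [← oddPart_oddPart_qp_div, ← heven]
    ext n
    simp only [coeff_mk, coeff_oddPart, coeff_evenPart]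
    ring_nf
  obtain ⟨G, hGmap⟩ : qp 2 2 * qp 4 4 * qp 8 8 ^ 2 * (qp 1 1 ^ 3)⁻¹ ∈
      (map (Int.castRingHom ℚ)).range :=
    mul_mem (mul_mem (mul_mem (qp_mem_range_map_intCast 2 2) (qp_mem_range_map_intCast 4 4))
      (pow_mem (qp_mem_range_map_intCast 8 8) 2))
      (inv_mem_range_map_intCast (pow_mem (qp_mem_range_map_intCast 1 1) 3)
        (by simp [constantCoeff_qp (le_refl 1)]))
  refine ⟨hgf, natCast_dvd_of_mk_eq_mul_map_intCast (d := 4) (G := G) ?_⟩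
  rw [hgf, hGmap]
  push_cast
  ring
end

section
/- The congruence ∑_{n≥0} EO-bar(n) q^n ≡ (q^2;q^2)_∞^2 (q^4;q^4)_∞ (mod 4) holds, i.e., EO-bar(n) agrees modulo 4 with the n-th coefficient of (q^2;q^2)_∞^2 (q^4;q^4)_∞. -/
/-!
The defining identity `EObar · (q²;q²)² = (q⁴;q⁴)³` has integer coefficients. Modulo 4 we have
`(1 - x)⁴ = (1 - x²)²` factor by factor, hence `(q²;q²)⁴ = (q⁴;q⁴)²`, and multiplying the
identity by `(q²;q²)²` gives `(q⁴;q⁴)² · EObar = (q⁴;q⁴)² · (q²;q²)² (q⁴;q⁴)`. Since `(q⁴;q⁴)`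
is a unit, `EObar = (q²;q²)² (q⁴;q⁴)` over `ℤ/4`.
-/

open PowerSeries

open Finset

variable {R S : Type*} [CommRing R] [CommRing S]

noncomputable def qPoch (R : Type*) [CommRing R] (a c : ℕ) : R⟦X⟧ :=
  mk fun n => coeff n (∏ i ∈ range (n + 1), (1 - (X : R⟦X⟧) ^ (a + c * i)))

theorem qp_eq_qPoch (a c : ℕ) : qp a c = qPoch ℚ a c := rfl

theorem map_qPoch (f : R →+* S) (a c : ℕ) : map f (qPoch R a c) = qPoch S a c := by
  ext n
  rw [coeff_map, qPoch, qPoch, coeff_mk, coeff_mk, ← coeff_map, map_prod]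
  simp

theorem constantCoeff_qPoch {a : ℕ} (ha : 0 < a) (c : ℕ) : constantCoeff (qPoch R a c) = 1 := by
  simp [qPoch, ha.ne']

theorem coeff_prod_one_sub_X_pow (a : ℕ) {c : ℕ} (hc : 0 < c) {n N : ℕ} (hN : n < N) :
    coeff n (∏ i ∈ range N, (1 - (X : R⟦X⟧) ^ (a + c * i))) = coeff n (qPoch R a c) := by
  rw [qPoch, coeff_mk]
  induction N, hN using Nat.le_induction with
  | base => rfl
  | succ N hN ih =>
    rw [prod_range_succ, mul_sub, mul_one, map_sub, coeff_mul_X_pow', if_neg, sub_zero, ih]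
    nlinarith

theorem X_pow_dvd_qPoch_sub_prod (a : ℕ) {c : ℕ} (hc : 0 < c) (N : ℕ) :
    X ^ N ∣ qPoch R a c - ∏ i ∈ range N, (1 - (X : R⟦X⟧) ^ (a + c * i)) :=
  X_pow_dvd_iff.mpr fun n hn => by rw [map_sub, coeff_prod_one_sub_X_pow a hc hn, sub_self]

theorem one_sub_pow_four_of_four_eq_zero {A : Type*} [CommRing A] (h4 : (4 : A) = 0) (x : A) :
    (1 - x) ^ 4 = (1 - x ^ 2) ^ 2 := by
  linear_combination -x * (1 - x) ^ 2 * h4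

theorem qPoch_pow_four_of_four_eq_zero (h4 : (4 : R) = 0) (a : ℕ) {c : ℕ} (hc : 0 < c) :
    qPoch R a c ^ 4 = qPoch R (2 * a) (2 * c) ^ 2 := by
  have h4' : (4 : R⟦X⟧) = 0 := by rw [← map_ofNat C 4, h4, map_zero]
  ext n
  set F := ∏ i ∈ range (n + 1), (1 - (X : R⟦X⟧) ^ (a + c * i))
  set G := ∏ i ∈ range (n + 1), (1 - (X : R⟦X⟧) ^ (2 * a + 2 * c * i))
  have hFG : F ^ 4 = G ^ 2 := by
    rw [← prod_pow, ← prod_pow]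
    refine prod_congr rfl fun i _ => ?_
    rw [one_sub_pow_four_of_four_eq_zero h4', ← pow_mul]
    ring_nf
  have hdvd : X ^ (n + 1) ∣ qPoch R a c ^ 4 - qPoch R (2 * a) (2 * c) ^ 2 := by
    have hF := (X_pow_dvd_qPoch_sub_prod a hc (n + 1)).trans (sub_dvd_pow_sub_pow _ F 4)
    have hG := (X_pow_dvd_qPoch_sub_prod (2 * a) (by omega) (n + 1)).trans
      (sub_dvd_pow_sub_pow _ G 2)
    simpa [hFG] using dvd_sub hF hG
  rw [← sub_eq_zero, ← map_sub]
  exact X_pow_dvd_iff.mp hdvd n n.lt_succ_self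

theorem eq_sq_mul_of_mul_sq_eq_pow_three {A : Type*} [CommRing A] {e p b : A} (hb : IsUnit b)
    (h : e * p ^ 2 = b ^ 3) (hp : p ^ 4 = b ^ 2) : e = p ^ 2 * b :=
  (hb.pow 2).mul_left_cancel (by linear_combination p ^ 2 * h - e * hp)

/-- `∑_{n≥0} EObar(n) qⁿ ≡ (q²;q²)_∞² (q⁴;q⁴)_∞ (mod 4)`, coefficientwise. -/
theorem EObar_cong_mod_four (EObar : ℕ → ℕ)
    (hEO : PowerSeries.mk (fun n => (EObar n : ℚ)) = qp 4 4 ^ 3 * (qp 2 2 ^ 2)⁻¹) :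
    ∀ n : ℕ, ∃ m : ℤ,
      (EObar n : ℚ) = PowerSeries.coeff n (qp 2 2 ^ 2 * qp 4 4) + 4 * m := by
  set E : ℤ⟦X⟧ := mk fun n => (EObar n : ℤ)
  have hE : E * qPoch ℤ 2 2 ^ 2 = qPoch ℤ 4 4 ^ 3 := by
    apply map_injective (Int.castRingHom ℚ) Int.cast_injective
    have hunit : constantCoeff (qp 2 2 ^ 2) ≠ 0 := by
      simp [qp_eq_qPoch, constantCoeff_qPoch]
    have hEQ : map (Int.castRingHom ℚ) E = mk fun n => (EObar n : ℚ) := by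
      ext n; simp [E]
    simp only [map_mul, map_pow, map_qPoch, hEQ, ← qp_eq_qPoch]
    rw [hEO, mul_assoc, PowerSeries.inv_mul_cancel _ hunit, mul_one]
  have hmod : map (Int.castRingHom (ZMod 4)) E =
      map (Int.castRingHom (ZMod 4)) (qPoch ℤ 2 2 ^ 2 * qPoch ℤ 4 4) := by
    have hE4 := congrArg (map (Int.castRingHom (ZMod 4))) hE
    simp only [map_mul, map_pow, map_qPoch] at hE4 ⊢
    have hB : IsUnit (qPoch (ZMod 4) 4 4) :=
      isUnit_iff_constantCoeff.mpr (by rw [constantCoeff_qPoch four_pos]; exact isUnit_one)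
    exact eq_sq_mul_of_mul_sq_eq_pow_three hB hE4
      (qPoch_pow_four_of_four_eq_zero (R := ZMod 4) rfl 2 two_pos)
  intro n
  have hn := congrArg (coeff n) hmod
  rw [coeff_map, coeff_map, coeff_mk] at hn
  obtain ⟨m, hm⟩ := (ZMod.intCast_eq_intCast_iff_dvd_sub _ _ 4).mp hn
  refine ⟨-m, ?_⟩
  rw [qp_eq_qPoch, qp_eq_qPoch, ← map_qPoch (Int.castRingHom ℚ), ← map_qPoch (Int.castRingHom ℚ),
    ← map_pow, ← map_mul, coeff_map, eq_intCast]
  have hmQ := congrArg (Int.cast : ℤ → ℚ) hm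
  push_cast at hmQ ⊢
  linarith
end
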